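/- There is an absolute constant C > 0 such that for all integers k ≥ 1 and f ≥ 1: if H is a finite simple graph on n vertices with colored vertices and edges that admits a 2k-blocking set B in which every edge of H appears in at most f pairs of B, then the number of edges {u,v} of H with c(u) = c(v) is at most C·f·n^{1+1/k}. -/

import Mathlib

/-!
Keep only the monochromatic edges and thin them out at random: choose `σ : colors → Fin (2f+1)`
uniformly and keep an edge `e` when `σ (c e) = 0` while `σ χ ≠ 0` for the at most `f` colors `χ`
paired with `e` in `B`. By Bernoulli's inequality every edge survives with probability at least
`1 / (2(2f+1))`, so some choice of `σ` keeps that fraction of the monochromatic edges. The kept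
graph has no cycle of length at most `2k`: the pair `(e, χ)` blocking such a cycle cannot take `χ`
from a vertex, since the cycle is monochromatic and `χ` differs from the colors of the ends of `e`,
nor from an edge `e'`, since `σ (c e') = 0 ≠ σ χ`. The Moore bound — by peeling off vertices of low
degree and counting the breadth-first layers, a graph of girth greater than `2k` has at most
`2 n^{1+1/k}` edges — then gives the claim with `C = 12`.
-/

open Finset SimpleGraph

namespace SimpleGraph

variable {V : Type*} {G : SimpleGraph V}

lemma egirth_le_length_add_length [DecidableEq V] {u w : V} {p q : G.Walk u w}
    (hp : p.IsPath) (hq : q.IsPath) (hpq : p ≠ q) :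
    G.egirth ≤ p.length + q.length := by
  induction p with
  | nil => exact absurd (Walk.isPath_iff_nil.mp hq).eq_nil.symm hpq
  | @cons u x w h p ih =>
    cases q with
    | nil => exact absurd (Walk.isPath_iff_nil.mp hp).eq_nil hpq
    | @cons _ y _ h' q =>
      by_cases hxy : x = y
      · subst hxy
        have := ih hp.of_cons hq.of_cons (by rintro rfl; exact hpq rfl)
        simp only [Walk.length_cons, Nat.cast_add, Nat.cast_one] at this ⊢
        exact this.trans (by gcongr <;> exact le_self_add)
      · -- the walk `x ⇝ w ⇝ y → u`, shortened to a path, closes a cycle with the edge `ux`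
        set d := p.append (Walk.cons h' q).reverse
        have hu : s(u, x) ∉ d.bypass.edges := fun hmem => by
          have hup := (Walk.cons_isPath_iff _ _).mp hp
          have huq := (Walk.cons_isPath_iff _ _).mp hq
          have := d.edges_bypass_subset_edges hmem
          simp only [d, Walk.edges_append, Walk.edges_reverse, Walk.edges_cons, List.mem_append,
            List.mem_reverse, List.mem_cons, Sym2.eq_iff] at this
          rcases this with hp' | (⟨-, hxy'⟩ | ⟨-, hxu⟩) | hq'
          · exact hup.2 (p.fst_mem_support_of_mem_edges hp')
          · exact hxy hxy'
          · exact G.ne_of_adj h hxu.symm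
          · exact huq.2 (q.fst_mem_support_of_mem_edges hq')
        calc G.egirth ≤ (Walk.cons h d.bypass).length :=
              egirth_le_length (Path.cons_isCycle ⟨d.bypass, d.bypass_isPath⟩ h hu)
          _ ≤ _ := by
            have := d.length_bypass_le_length
            simp only [d, Walk.length_cons, Walk.length_append, Walk.length_reverse] at this ⊢
            exact_mod_cast (by omega)

lemma Walk.IsPath.concat_of_length_le_edist [DecidableEq V] {v x w : V} {p : G.Walk v x}
    (hp : p.IsPath) (h : G.Adj x w) (hw : p.length ≤ G.edist v w) : (p.concat h).IsPath := by
  refine hp.concat (fun hmem => G.ne_of_adj h ?_) h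
  have hsplit := congrArg Walk.length (p.take_spec hmem)
  have hle : p.length ≤ (p.takeUntil w hmem).length := by
    exact_mod_cast hw.trans (G.edist_le _)
  rw [Walk.length_append] at hsplit
  exact ((p.dropUntil w hmem).eq_of_length_eq_zero (by omega)).symm

lemma eq_of_adj_of_edist_le [DecidableEq V] {k j : ℕ} (hG : (2 * k : ℕ) < G.egirth)
    (hjk : j < k) {v w x y : V} (hw : j ≤ G.edist v w) (hx : G.edist v x ≤ j)
    (hy : G.edist v y ≤ j) (hxw : G.Adj x w) (hyw : G.Adj y w) : x = y := by
  have short_path : ∀ {z}, G.edist v z ≤ j → ∃ p : G.Walk v z, p.IsPath ∧ p.length ≤ j := by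
    intro z hz
    obtain ⟨p, hp⟩ :=
      exists_walk_of_edist_ne_top (ne_top_of_le_ne_top (ENat.natCast_ne_top j) hz)
    refine ⟨p.bypass, p.bypass_isPath, ?_⟩
    exact_mod_cast (Nat.cast_le.mpr p.length_bypass_le_length).trans (hp.trans_le hz)
  obtain ⟨px, hpx, hlx⟩ := short_path hx
  obtain ⟨py, hpy, hly⟩ := short_path hy
  by_contra hxy
  have := egirth_le_length_add_length
    (hpx.concat_of_length_le_edist hxw ((Nat.cast_le.mpr hlx).trans hw))
    (hpy.concat_of_length_le_edist hyw ((Nat.cast_le.mpr hly).trans hw))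
    (fun h => hxy (Walk.concat_inj h).1)
  rw [Walk.length_concat, Walk.length_concat] at this
  have : ((px.length + 1 + (py.length + 1) : ℕ) : ℕ∞) ≤ (2 * k : ℕ) := Nat.cast_le.mpr (by omega)
  exact absurd hG (not_lt.mpr (by push_cast at *; order))

section Moore

variable [Fintype V] [DecidableEq V] [DecidableRel G.Adj] {k δ : ℕ}

lemma card_edist_eq_mul_le_card_edist_eq_succ (hG : (2 * k : ℕ) < G.egirth)
    (hdeg : ∀ a, δ < G.degree a) (v : V) {i : ℕ} (hik : i < k) :
    #{w | G.edist v w = i} * δ ≤ #{w | G.edist v w = (i + 1 : ℕ)} := by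
  have := card_mul_le_card_mul (r := G.Adj) (m := δ) (n := 1)
    (s := {w | G.edist v w = i}) (t := {w | G.edist v w = (i + 1 : ℕ)}) ?_ ?_
  · simpa using this
  · intro w hw
    rw [mem_filter_univ] at hw
    have hsub : G.neighborFinset w ⊆
        bipartiteAbove G.Adj {x | G.edist v x = (i + 1 : ℕ)} w ∪
          {x ∈ G.neighborFinset w | G.edist v x ≤ i} := by
      intro x hx
      rw [mem_neighborFinset] at hx
      have hle : G.edist v x ≤ i + 1 :=
        hw ▸ G.edist_triangle.trans_eq (congrArg _ (edist_eq_one_iff_adj.mpr hx))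
      rcases hle.lt_or_eq with hlt | heq
      · refine mem_union_right _ ?_
        simp [hx, (ENat.lt_add_one_iff (ENat.natCast_ne_top i)).mp hlt]
      · exact mem_union_left _ (by simp [bipartiteAbove, hx, heq])
    have hclose : #{x ∈ G.neighborFinset w | G.edist v x ≤ i} ≤ 1 := by
      refine card_le_one.mpr fun x hx y hy => ?_
      simp only [mem_filter, mem_neighborFinset] at hx hy
      exact eq_of_adj_of_edist_le hG hik hw.ge hx.2 hy.2 hx.1.symm hy.1.symm
    have := (card_le_card hsub).trans (card_union_le _ _)
    rw [card_neighborFinset_eq_degree] at this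
    have := hdeg w
    omega
  · intro x hx
    rw [mem_filter_univ] at hx
    refine card_le_one.mpr fun w₁ hw₁ w₂ hw₂ => ?_
    simp only [bipartiteBelow, mem_filter, mem_univ, true_and] at hw₁ hw₂
    exact eq_of_adj_of_edist_le hG hik (hx ▸ Nat.cast_le.mpr i.le_succ) hw₁.1.le hw₂.1.le
      hw₁.2 hw₂.2

lemma pow_le_card_of_lt_degree (hG : (2 * k : ℕ) < G.egirth) (hdeg : ∀ a, δ < G.degree a)
    [Nonempty V] : δ ^ k ≤ Fintype.card V := by
  obtain ⟨v⟩ := ‹Nonempty V›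
  have layers : ∀ i ≤ k, δ ^ i ≤ #{w | G.edist v w = i} := by
    intro i
    induction i with
    | zero => simp [filter_nonempty_iff]
    | succ i ih =>
      intro hik
      rw [pow_succ]
      exact (Nat.mul_le_mul_right δ (ih (by omega))).trans
        (card_edist_eq_mul_le_card_edist_eq_succ hG hdeg v hik)
  exact (layers k le_rfl).trans (card_le_univ _)

lemma exists_subset_forall_lt_card_adj (d : ℕ) (S : Finset V)
    (h : d * #S < #(G.edgeFinset ∩ S.sym2)) :
    ∃ T ⊆ S, T.Nonempty ∧ ∀ v ∈ T, d < #{w ∈ T | G.Adj v w} := by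
  induction S using Finset.strongInduction with
  | H S ih =>
  by_cases hS : ∀ v ∈ S, d < #{w ∈ S | G.Adj v w}
  · refine ⟨S, subset_rfl, ?_, hS⟩
    by_contra hempty
    simp [not_nonempty_iff_eq_empty.mp hempty] at h
  · push Not at hS
    obtain ⟨v, hv, hdeg⟩ := hS
    -- deleting `v` loses at most `d` edges
    have hsub : G.edgeFinset ∩ S.sym2 ⊆
        G.edgeFinset ∩ (S.erase v).sym2 ∪ {w ∈ S | G.Adj v w}.image (s(v, ·)) := by
      intro e he
      simp only [mem_inter, mem_sym2_iff, mem_edgeFinset] at he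
      by_cases hve : v ∈ e
      · obtain ⟨w, rfl⟩ := Sym2.mem_iff_exists.mp hve
        exact mem_union_right _ (mem_image.mpr ⟨w, by simp_all, rfl⟩)
      · refine mem_union_left _ ?_
        simp only [mem_inter, mem_sym2_iff, mem_edgeFinset, mem_erase]
        exact ⟨he.1, fun x hx => ⟨fun hxv => hve (hxv ▸ hx), he.2 x hx⟩⟩
    have hcard := (card_le_card hsub).trans ((card_union_le _ _).trans
      (Nat.add_le_add_left card_image_le _))
    have herase := card_erase_add_one hv
    obtain ⟨T, hT, hTne, hTdeg⟩ := ih (S.erase v) (erase_ssubset hv) (by nlinarith)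
    exact ⟨T, hT.trans (erase_subset v S), hTne, hTdeg⟩

lemma exists_nonempty_forall_lt_degree_induce (d : ℕ)
    (h : d * Fintype.card V < #G.edgeFinset) :
    ∃ T : Finset V, T.Nonempty ∧ ∀ a, d < (G.induce (T : Set V)).degree a := by
  obtain ⟨T, -, hTne, hTdeg⟩ := exists_subset_forall_lt_card_adj (G := G) d univ
    (by rwa [sym2_univ, inter_univ, card_univ])
  refine ⟨T, hTne, fun a => (hTdeg a a.2).trans_le ?_⟩
  rw [← card_neighborFinset_eq_degree, ← card_map (Function.Embedding.subtype _)]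
  refine card_le_card fun w hw => ?_
  simp only [mem_filter] at hw
  simpa [hw.1] using hw.2

lemma card_edgeFinset_le_mul_card (hG : (2 * k : ℕ) < G.egirth) {d : ℕ}
    (hd : Fintype.card V < d ^ k) : #G.edgeFinset ≤ d * Fintype.card V := by
  by_contra! h
  obtain ⟨T, hTne, hTdeg⟩ := exists_nonempty_forall_lt_degree_induce d h
  have : Nonempty (T : Set V) := hTne.to_subtype
  have hGT := hG.trans_le (Embedding.induce (G := G) (T : Set V)).isContained.egirth_le
  have := (pow_le_card_of_lt_degree hGT hTdeg).trans (Fintype.card_subtype_le _)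
  omega

theorem card_edgeFinset_le_of_lt_egirth (hk : 1 ≤ k) (hG : (2 * k : ℕ) < G.egirth) :
    (#G.edgeFinset : ℝ) ≤ 2 * (Fintype.card V : ℝ) ^ (1 + 1 / (k : ℝ)) := by
  set n := Fintype.card V
  set x := (n : ℝ) ^ (1 / (k : ℝ))
  have hx : 0 ≤ x := by positivity
  have hxk : x ^ k = n := by
    rw [← Real.rpow_natCast, ← Real.rpow_mul n.cast_nonneg, one_div_mul_cancel (by positivity),
      Real.rpow_one]
  have hd : n < (⌊x⌋₊ + 1) ^ k := by
    have := pow_lt_pow_left₀ (Nat.lt_floor_add_one x) hx (by omega : k ≠ 0)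
    exact_mod_cast hxk ▸ this
  have hE : (#G.edgeFinset : ℝ) ≤ (x + 1) * n := by
    have := card_edgeFinset_le_mul_card hG hd
    calc (#G.edgeFinset : ℝ) ≤ ((⌊x⌋₊ + 1 : ℕ) : ℝ) * n := by exact_mod_cast this
      _ ≤ (x + 1) * n := by push_cast; gcongr; exact Nat.floor_le hx
  rcases Nat.eq_zero_or_pos n with hn | hn
  · rw [hn, Nat.cast_zero, mul_zero] at hE
    rwa [hn, Nat.cast_zero, Real.zero_rpow (by positivity), mul_zero]
  · have hx1 : 1 ≤ x := Real.one_le_rpow (by exact_mod_cast hn) (by positivity)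
    calc (#G.edgeFinset : ℝ) ≤ (x + 1) * n := hE
      _ ≤ 2 * x * n := by gcongr; linarith
      _ = 2 * (n : ℝ) ^ (1 + 1 / (k : ℝ)) := by
        rw [Real.rpow_add (by exact_mod_cast hn), Real.rpow_one]; ring

end Moore

end SimpleGraph

lemma pow_two_mul_add_one_le_two_mul_pow {a f : ℕ} (h : a ≤ f) :
    (2 * f + 1) ^ a ≤ 2 * (2 * f) ^ a := by
  have hpos : (0 : ℝ) < 2 * f + 1 := by positivity
  -- Bernoulli: `(1 - 1/(2f+1))^a ≥ 1 - a/(2f+1) ≥ 1/2`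
  have hbern := one_add_mul_sub_le_pow
    ((neg_nonpos.mpr zero_le_one).trans (by positivity : (0 : ℝ) ≤ 2 * f / (2 * f + 1))) a
  have haf : (a : ℝ) ≤ f := by exact_mod_cast h
  have hhalf : (1 : ℝ) / 2 ≤ (2 * f / (2 * f + 1)) ^ a := by
    refine le_trans ?_ hbern
    rw [div_sub_one hpos.ne', mul_div_assoc', ← sub_le_iff_le_add', le_div_iff₀ hpos]
    linarith
  rw [div_pow, le_div_iff₀ (by positivity)] at hhalf
  exact_mod_cast (by linarith : ((2 * f + 1 : ℝ)) ^ a ≤ 2 * (2 * f) ^ a)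

lemma card_filter_apply_eq_zero_and_ne_zero_mul {ι : Type*} [Fintype ι] [DecidableEq ι] (m : ℕ)
    {c : ι} {F : Finset ι} (hc : c ∉ F) :
    #{σ : ι → Fin (m + 1) | σ c = 0 ∧ ∀ i ∈ F, σ i ≠ 0} * (m + 1) ^ (#F + 1) =
      m ^ #F * (m + 1) ^ Fintype.card ι := by
  set t : ι → Finset (Fin (m + 1)) :=
    fun i => if i = c then {0} else if i ∈ F then univ.erase 0 else univ
  have ht : ({σ : ι → Fin (m + 1) | σ c = 0 ∧ ∀ i ∈ F, σ i ≠ 0} : Finset _) =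
      Fintype.piFinset t := by
    ext σ
    simp only [mem_filter_univ, Fintype.mem_piFinset]
    constructor
    · rintro ⟨h0, hF⟩ i
      dsimp only [t]
      split_ifs with hic hiF
      · simp [hic, h0]
      · simp [hF i hiF]
      · exact mem_univ _
    · intro h
      refine ⟨by simpa [t] using h c, fun i hi => ?_⟩
      have := h i
      dsimp only [t] at this
      rw [if_neg (by rintro rfl; exact hc hi), if_pos hi] at this
      exact ne_of_mem_erase this
  have hcard : Fintype.card ι = #(insert c F)ᶜ + (#F + 1) := by
    rw [← card_insert_of_notMem hc, card_compl_add_card]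
  rw [ht, Fintype.card_piFinset, ← prod_mul_prod_compl (insert c F), prod_insert hc,
    prod_congr (s₁ := F) rfl (g := fun _ => m) fun i hi => by
      simp [t, hi, ne_of_mem_of_not_mem hi hc],
    prod_congr (s₁ := (insert c F)ᶜ) rfl (g := fun _ => m + 1) fun i hi => by simp_all [t]]
  simp only [t, if_pos, card_singleton, prod_const, hcard, pow_add]
  ring

lemma exists_card_le_mul_card_filter {Ω α : Type*} [Fintype Ω] [Nonempty Ω] (M : Finset α)
    (Q : Ω → α → Prop) [∀ ω e, Decidable (Q ω e)] (c : ℕ)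
    (h : ∀ e ∈ M, Fintype.card Ω ≤ c * #{ω | Q ω e}) : ∃ ω, #M ≤ c * #{e ∈ M | Q ω e} := by
  by_contra! hlt
  have hswap := sum_card_bipartiteAbove_eq_sum_card_bipartiteBelow (s := univ) (t := M) Q
  simp only [bipartiteAbove, bipartiteBelow] at hswap
  have := calc #M * Fintype.card Ω = ∑ e ∈ M, Fintype.card Ω := by simp
    _ ≤ ∑ e ∈ M, c * #{ω | Q ω e} := sum_le_sum h
    _ = ∑ ω, c * #{e ∈ M | Q ω e} := by rw [← mul_sum, ← mul_sum, hswap]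
    _ < ∑ ω : Ω, #M := sum_lt_sum_of_nonempty univ_nonempty fun ω _ => hlt ω
    _ = #M * Fintype.card Ω := by simp [mul_comm]
  exact lt_irrefl _ this

lemma exists_card_le_mul_card_filter_mem_disjoint {α ι : Type*} [Fintype ι] [DecidableEq ι]
    (f : ℕ) (M : Finset α) (key : α → ι) (forb : α → Finset ι) (hkey : ∀ e ∈ M, key e ∉ forb e)
    (hforb : ∀ e ∈ M, #(forb e) ≤ f) :
    ∃ S : Finset ι, #M ≤ 2 * (2 * f + 1) * #{e ∈ M | key e ∈ S ∧ Disjoint (forb e) S} := by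
  -- `S` is the zero set of a uniformly random `σ : ι → Fin (2f+1)`
  obtain ⟨σ, hσ⟩ := exists_card_le_mul_card_filter M
    (fun (σ : ι → Fin (2 * f + 1)) e => σ (key e) = 0 ∧ ∀ i ∈ forb e, σ i ≠ 0) (2 * (2 * f + 1))
    fun e he => by
      have hcount := card_filter_apply_eq_zero_and_ne_zero_mul (2 * f) (hkey e he)
      have hpow := pow_two_mul_add_one_le_two_mul_pow (hforb e he)
      have hpos : 0 < (2 * f) ^ #(forb e) := by
        have := Nat.one_le_pow #(forb e) (2 * f + 1) (by omega)
        omega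
      rw [Fintype.card_fun, Fintype.card_fin]
      refine Nat.le_of_mul_le_mul_left ?_ hpos
      calc (2 * f) ^ #(forb e) * (2 * f + 1) ^ Fintype.card ι
          = _ * (2 * f + 1) * (2 * f + 1) ^ #(forb e) := by rw [← hcount]; ring
        _ ≤ _ * (2 * f + 1) * (2 * (2 * f) ^ #(forb e)) := Nat.mul_le_mul_left _ hpow
        _ = _ := by ring
  refine ⟨univ.filter (σ · = 0), hσ.trans_eq ?_⟩
  congr 2
  exact filter_congr fun e _ => by simp [Finset.disjoint_left]

namespace SimpleGraph

variable {V 𝒞 : Type*} {G H : SimpleGraph V}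

/-- The cycle condition in the definition of a `2k`-blocking set. -/
def BlocksShortCycles (H : SimpleGraph V) (k : ℕ) (cE : Sym2 V → 𝒞) (cV : V → 𝒞)
    (B : Finset (Sym2 V × 𝒞)) : Prop :=
  ∀ (a : V) (W : H.Walk a a), W.IsCycle → W.length ≤ 2 * k →
    ∃ p ∈ B, p.1 ∈ W.edges ∧ ((∃ e' ∈ W.edges, cE e' = p.2) ∨ ∃ x ∈ W.support, cV x = p.2)

lemma Walk.apply_eq_of_mem_support {α : Type*} {c : V → α} (hc : ∀ u v, G.Adj u v → c u = c v)
    {a b : V} (p : G.Walk a b) {x : V} (hx : x ∈ p.support) : c x = c a := by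
  induction p with
  | nil => rw [Walk.support_nil, List.mem_singleton] at hx; rw [hx]
  | cons h p ih =>
    rcases List.mem_cons.mp hx with rfl | hx
    · rfl
    · exact (ih hx).trans (hc _ _ h).symm

variable {k : ℕ} {cE : Sym2 V → 𝒞} {cV : V → 𝒞} {B : Finset (Sym2 V × 𝒞)}

lemma BlocksShortCycles.lt_egirth (hblock : H.BlocksShortCycles k cE cV B)
    (hB : ∀ p ∈ B, ∀ x ∈ p.1, cV x ≠ p.2) (hGH : G ≤ H) (hmono : ∀ u v, G.Adj u v → cV u = cV v)
    (hsel : ∀ p ∈ B, p.1 ∈ G.edgeSet → ∀ e ∈ G.edgeSet, cE e ≠ p.2) :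
    (2 * k : ℕ) < G.egirth := by
  rw [← ENat.add_one_le_iff (ENat.natCast_ne_top _), le_egirth]
  intro a c hc
  by_contra! hlen
  obtain ⟨⟨⟨y, z⟩, χ⟩, hp, hpc, hcol⟩ := hblock a (c.mapLe hGH) (hc.mapLe hGH)
    (by
      rw [Walk.length_mapLe]
      exact_mod_cast (ENat.lt_add_one_iff (ENat.natCast_ne_top _)).mp hlen)
  rw [Walk.edges_mapLe_eq_edges] at hpc hcol
  rw [Walk.support_mapLe_eq_support] at hcol
  rcases hcol with ⟨e, he, hce⟩ | ⟨x, hx, hcx⟩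
  · exact hsel _ hp (c.edges_subset_edgeSet hpc) e (c.edges_subset_edgeSet he) hce
  · refine hB _ hp y (Sym2.mem_mk_left y z) ?_
    rw [c.apply_eq_of_mem_support hmono (c.fst_mem_support_of_mem_edges hpc),
      ← c.apply_eq_of_mem_support hmono hx, hcx]

lemma BlocksShortCycles.exists_lt_egirth_ncard_le [Fintype V] [DecidableEq V] {f : ℕ}
    (hblock : H.BlocksShortCycles k cE cV B) (hB : ∀ p ∈ B, p.2 ≠ cE p.1 ∧ ∀ x ∈ p.1, cV x ≠ p.2)
    (hmult : ∀ e, #{p ∈ B | p.1 = e} ≤ f) :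
    ∃ G : SimpleGraph V, (2 * k : ℕ) < G.egirth ∧
      {e ∈ H.edgeSet | ∀ u v : V, e = s(u, v) → cV u = cV v}.ncard ≤
        2 * (2 * f + 1) * G.edgeSet.ncard := by
  classical
  set M : Finset (Sym2 V) := {e ∈ H.edgeFinset | ∀ u v : V, e = s(u, v) → cV u = cV v}
  -- keep the monochromatic edges whose color is selected while all their blocking colors are not
  set R : Finset 𝒞 := univ.image cE ∪ B.image Prod.snd
  set key : Sym2 V → R := fun e => ⟨cE e, by simp [R]⟩
  set forb : Sym2 V → Finset R := fun e => {χ | (e, χ.1) ∈ B}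
  obtain ⟨S, hS⟩ := exists_card_le_mul_card_filter_mem_disjoint f M key forb
    (fun e _ hmem => (hB _ (mem_filter.mp hmem).2).1 rfl)
    (fun e _ => (card_le_card_of_injOn (fun χ => (e, χ.1)) (by intro χ hχ; simp_all [forb])
      (fun χ _ χ' _ h => Subtype.ext (Prod.ext_iff.mp h).2)).trans (hmult e))
  set K := {e ∈ M | key e ∈ S ∧ Disjoint (forb e) S}
  have hKH : ∀ e ∈ K, e ∈ H.edgeSet := fun e he => by simp_all [K, M]
  have hGK : (fromEdgeSet (K : Set (Sym2 V))).edgeSet = K := by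
    rw [edgeSet_fromEdgeSet, sdiff_eq_left, Set.disjoint_left]
    exact fun e he => H.not_isDiag_of_mem_edgeSet (hKH e he)
  refine ⟨fromEdgeSet K, hblock.lt_egirth (fun p hp => (hB p hp).2)
    (fun u v huv => hKH _ ((fromEdgeSet_adj _).mp huv).1) (fun u v huv => ?_) ?_, ?_⟩
  · have huvK := ((fromEdgeSet_adj _).mp huv).1
    simp only [K, M, coe_filter, mem_filter] at huvK
    exact huvK.1.2 u v rfl
  · intro p hp hp1 e he hce
    rw [hGK, mem_coe, mem_filter] at hp1 he
    exact Finset.disjoint_left.mp hp1.2.2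
      (show key e ∈ forb p.1 by simp [forb, key, hce, hp]) he.2.1
  · have hM : {e ∈ H.edgeSet | ∀ u v : V, e = s(u, v) → cV u = cV v}.ncard = #M := by
      rw [← Set.ncard_coe_finset]; congr 1; ext; simp [M]
    rwa [hGK, Set.ncard_coe_finset, hM]

end SimpleGraph

/-- in a graph with colored vertices and edges admitting a `2k`-blocking
set in which every edge appears in at most `f` pairs, the number of monochromatic
edges (endpoints of equal color) is `O(f·n^{1+1/k})`. -/
theorem stmt_14 :
    ∃ C : ℝ, 0 < C ∧
      ∀ (k f : ℕ), 1 ≤ k → 1 ≤ f →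
        ∀ (V : Type) [Fintype V] [DecidableEq V] (𝒞 : Type) (H : SimpleGraph V)
          (cE : Sym2 V → 𝒞) (cV : V → 𝒞) (B : Finset (Sym2 V × 𝒞)),
          -- `B` consists of pairs `(e, χ)` with `e ∈ E(H)` and
          -- `χ ∉ {c(e), c(u), c(v)}` where `e = {u,v}`
          (∀ p ∈ B, p.1 ∈ H.edgeSet ∧ p.2 ≠ cE p.1 ∧ ∀ x ∈ p.1, cV x ≠ p.2) →
          -- every cycle with at most `2k` edges is blocked by some pair of `B`
          (∀ (a : V) (W : H.Walk a a), W.IsCycle → W.length ≤ 2 * k →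
            ∃ p ∈ B, p.1 ∈ W.edges ∧
              ((∃ e' ∈ W.edges, cE e' = p.2) ∨ ∃ x ∈ W.support, cV x = p.2)) →
          -- every edge of `H` appears in at most `f` pairs of `B`
          (∀ e : Sym2 V, (B.filter (fun p => p.1 = e)).card ≤ f) →
          (({e ∈ H.edgeSet | ∀ u v : V, e = s(u, v) → cV u = cV v}).ncard : ℝ) ≤
            C * f * (Fintype.card V : ℝ) ^ (1 + 1 / (k : ℝ)) := by
  refine ⟨12, by norm_num, fun k f hk hf V _ _ 𝒞 H cE cV B hB hblock hmult => ?_⟩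
  classical
  obtain ⟨G, hG, hkept⟩ := BlocksShortCycles.exists_lt_egirth_ncard_le (f := f) hblock
    (fun p hp => (hB p hp).2) hmult
  have hmoore := card_edgeFinset_le_of_lt_egirth hk hG
  rw [← Set.ncard_coe_finset, coe_edgeFinset] at hmoore
  have hf' : (1 : ℝ) ≤ f := by exact_mod_cast hf
  have hX : 0 ≤ (Fintype.card V : ℝ) ^ (1 + 1 / (k : ℝ)) := by positivity
  calc _ ≤ 2 * (2 * f + 1) * (G.edgeSet.ncard : ℝ) := by exact_mod_cast hkept
    _ ≤ 2 * (2 * f + 1) * (2 * (Fintype.card V : ℝ) ^ (1 + 1 / (k : ℝ))) := by gcongr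
    _ ≤ 12 * f * (Fintype.card V : ℝ) ^ (1 + 1 / (k : ℝ)) := by nlinarith
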